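/- Fix an integer q≥3 and set a(x) = ((q−1)e^x − e^{2x})/(e^x+q−1)³ for x≥0. Then there is a unique r(q)∈(−1,0) such that ∫_0^∞ x^{r(q)}·a(x) dx = 0; moreover ∫_0^∞ x^{r}·a(x) dx > 0 for every r∈(−1, r(q)) and ∫_0^∞ x^{r}·a(x) dx < 0 for every r∈(r(q), 0). -/

import Mathlib

open MeasureTheory Filter Topology Set

noncomputable def afun (q : ℝ) (x : ℝ) : ℝ :=
  ((q - 1) * Real.exp x - Real.exp (2 * x)) / (Real.exp x + q - 1) ^ 3

/-!
Let `x₀ = log (q - 1) > 0` and `F r = ∫_0^∞ x^r a(x) dx`. Since `a > 0` on `[0, x₀)` and `a < 0`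
beyond, for `r₁ < r₂` the weight `(x/x₀)^r₁ - (x/x₀)^r₂` has the sign of `a`, so `r ↦ F r / x₀^r`
is strictly decreasing; hence once `F` is `≤ 0` it stays negative. `F` is continuous on `(-1, ∞)`
(it is a Mellin transform of `a`), `F 0 = ∫ a = -1/q²`, and `F r → +∞` as `r → -1⁺` because
`a(0) > 0`. The intermediate value theorem then gives the unique sign change `r(q)`.
-/

open Real Asymptotics

noncomputable def powerMoment (f : ℝ → ℝ) (r : ℝ) : ℝ := ∫ x in Ioi 0, x ^ r * f x

lemma exists_sign_change_of_crossing {F : ℝ → ℝ} {a b : ℝ} (hF : ContinuousOn F (Ioc a b))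
    (hpos : ∃ r ∈ Ioo a b, 0 < F r) (hb : F b < 0)
    (hcross : ∀ r₁ ∈ Ioc a b, ∀ r₂ ∈ Ioc a b, r₁ < r₂ → F r₁ ≤ 0 → F r₂ < 0) :
    ∃ rq ∈ Ioo a b, F rq = 0 ∧ (∀ r ∈ Ioo a rq, 0 < F r) ∧ (∀ r ∈ Ioo rq b, F r < 0) ∧
      ∀ r ∈ Ioo a b, F r = 0 → r = rq := by
  obtain ⟨r₀, hr₀, hFr₀⟩ := hpos
  obtain ⟨rq, hrq, hFrq⟩ := intermediate_value_Icc' hr₀.2.le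
    (hF.mono (Icc_subset_Ioc hr₀.1 le_rfl)) ⟨hb.le, hFr₀.le⟩
  have hrq' : rq ∈ Ioo a b := ⟨hr₀.1.trans_le hrq.1, hrq.2.lt_of_ne (by rintro rfl; linarith)⟩
  have hbefore : ∀ r ∈ Ioo a rq, 0 < F r := fun r hr => not_le.1 fun h =>
    (hcross r ⟨hr.1, (hr.2.trans hrq'.2).le⟩ rq (Ioo_subset_Ioc_self hrq') hr.2 h).ne hFrq
  have hafter : ∀ r ∈ Ioo rq b, F r < 0 := fun r hr =>
    hcross rq (Ioo_subset_Ioc_self hrq') r ⟨hrq'.1.trans hr.1, hr.2.le⟩ hr.1 hFrq.le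
  refine ⟨rq, hrq', hFrq, hbefore, hafter, fun r hr hFr => ?_⟩
  rcases lt_trichotomy r rq with h | h | h
  · exact absurd hFr (hbefore r ⟨hr.1, h⟩).ne'
  · exact h
  · exact absurd hFr (hafter r ⟨h, hr.2⟩).ne

section PowerMoment

variable {f : ℝ → ℝ} {x₀ : ℝ}

lemma isBigO_rpow_neg_of_isBigO_exp_neg (hf_top : f =O[atTop] fun x => exp (-x)) (a : ℝ) :
    f =O[atTop] (· ^ (-a)) :=
  hf_top.trans (by simpa using (isLittleO_exp_neg_mul_rpow_atTop one_pos (-a)).isBigO)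

lemma isBigO_rpow_nhdsGT_zero_of_continuous (hf : Continuous f) :
    f =O[𝓝[>] 0] (· ^ (-(0 : ℝ))) := by
  simpa using ((hf.tendsto 0).isBigO_one ℝ).mono nhdsWithin_le_nhds

lemma integrableOn_rpow_mul (hf : Continuous f) (hf_top : f =O[atTop] fun x => exp (-x))
    {r : ℝ} (hr : -1 < r) : IntegrableOn (fun x => x ^ r * f x) (Ioi 0) := by
  simpa using mellin_convergent_of_isBigO_scalar (s := r + 1)
    (hf.continuousOn.locallyIntegrableOn measurableSet_Ioi)
    (isBigO_rpow_neg_of_isBigO_exp_neg hf_top (r + 2)) (by linarith)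
    (isBigO_rpow_nhdsGT_zero_of_continuous hf) (by linarith)

lemma mellin_ofReal_add_one (r : ℝ) :
    mellin (fun x => (f x : ℂ)) (r + 1) = (powerMoment f r : ℂ) := by
  rw [mellin, powerMoment, ← integral_complex_ofReal]
  refine setIntegral_congr_fun measurableSet_Ioi fun x hx => ?_
  simp [Complex.ofReal_cpow (le_of_lt hx)]

lemma continuousOn_powerMoment (hf : Continuous f) (hf_top : f =O[atTop] fun x => exp (-x)) :
    ContinuousOn (powerMoment f) (Ioi (-1)) := by
  intro r hr
  have hmellin : DifferentiableAt ℂ (mellin (fun x => (f x : ℂ))) (r + 1) :=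
    mellin_differentiableAt_of_isBigO_rpow_exp (b := 0) one_pos
      ((Complex.continuous_ofReal.comp hf).continuousOn.locallyIntegrableOn measurableSet_Ioi)
      (by simpa using isBigO_norm_left.mpr hf_top)
      (by simpa using isBigO_norm_left.mpr (isBigO_rpow_nhdsGT_zero_of_continuous hf))
      (by simpa using neg_lt_iff_pos_add.mp hr)
  have hre : powerMoment f = fun r : ℝ => (mellin (fun x => (f x : ℂ)) ((r : ℂ) + 1)).re := by
    funext r
    simp [mellin_ofReal_add_one]
  rw [hre]
  exact (Complex.continuous_re.continuousAt.comp (hmellin.continuousAt.comp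
    (f := fun s : ℝ => (s : ℂ) + 1) (by fun_prop))).continuousWithinAt

lemma powerMoment_div_rpow (hx₀ : 0 < x₀) (r : ℝ) :
    powerMoment f r / x₀ ^ r = ∫ x in Ioi 0, (x / x₀) ^ r * f x := by
  rw [powerMoment, ← integral_div]
  refine setIntegral_congr_fun measurableSet_Ioi fun x hx => ?_
  rw [div_rpow (le_of_lt hx) hx₀.le]
  ring

lemma strictAntiOn_powerMoment_div_rpow (hf : Continuous f)
    (hf_top : f =O[atTop] fun x => exp (-x)) (hx₀ : 0 < x₀)
    (hpos : ∀ x ∈ Ioo 0 x₀, 0 < f x) (hneg : ∀ x ∈ Ioi x₀, f x ≤ 0) :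
    StrictAntiOn (fun r => powerMoment f r / x₀ ^ r) (Ioi (-1)) := by
  intro r₁ hr₁ r₂ hr₂ hr
  set g : ℝ → ℝ := fun x => ((x / x₀) ^ r₁ - (x / x₀) ^ r₂) * f x
  have hg_pos : ∀ x ∈ Ioo 0 x₀, 0 < g x := fun x hx =>
    mul_pos (sub_pos.2 (rpow_lt_rpow_of_exponent_gt (div_pos hx.1 hx₀)
      ((div_lt_one hx₀).2 hx.2) hr)) (hpos x hx)
  have hg_nonneg : ∀ x ∈ Ioi 0, 0 ≤ g x := by
    intro x hx
    rcases lt_or_ge x x₀ with hlt | hge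
    · exact (hg_pos x ⟨hx, hlt⟩).le
    · rcases hge.eq_or_lt with heq | hgt
      · simp [g, ← heq, div_self hx₀.ne']
      · exact mul_nonneg_of_nonpos_of_nonpos
          (sub_nonpos.2 (rpow_le_rpow_of_exponent_le ((one_lt_div hx₀).2 hgt).le hr.le))
          (hneg x hgt)
  have hint : ∀ r ∈ Ioi (-1 : ℝ), IntegrableOn (fun x => (x / x₀) ^ r * f x) (Ioi 0) := by
    intro r hr
    refine IntegrableOn.congr_fun ((integrableOn_rpow_mul hf hf_top hr).div_const (x₀ ^ r))
      (fun x hx => ?_) measurableSet_Ioi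
    simp only [div_rpow (le_of_lt hx) hx₀.le]
    ring
  have hg_int : IntegrableOn g (Ioi 0) := by
    simp only [g, sub_mul]
    exact (hint r₁ hr₁).sub (hint r₂ hr₂)
  have hg_integral : 0 < ∫ x in Ioi 0, g x := by
    rw [setIntegral_pos_iff_support_of_nonneg_ae
      ((ae_restrict_iff' measurableSet_Ioi).2 (Eventually.of_forall hg_nonneg)) hg_int]
    calc (0 : ENNReal) < volume (Ioo 0 x₀) := by simpa using hx₀
      _ ≤ volume (Function.support g ∩ Ioi 0) :=
        measure_mono fun x hx => ⟨(hg_pos x hx).ne', hx.1⟩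
  simp only [powerMoment_div_rpow hx₀]
  rw [← sub_pos, ← integral_sub (hint r₁ hr₁) (hint r₂ hr₂)]
  simpa only [g, sub_mul] using hg_integral

lemma le_setIntegral_Ioc_rpow_mul {δ m r : ℝ} (hδ : 0 < δ) (hδ1 : δ ≤ 1) (hm : 0 ≤ m)
    (hr : r ∈ Ioc (-1) 0) (hfm : ∀ x ∈ Ioc 0 δ, m ≤ f x)
    (hint : IntegrableOn (fun x => x ^ r * f x) (Ioc 0 δ)) :
    m * δ * (r + 1)⁻¹ ≤ ∫ x in Ioc 0 δ, x ^ r * f x := by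
  have hr1 : 0 < r + 1 := neg_lt_iff_pos_add.mp hr.1
  have hpow : IntegrableOn (fun x => x ^ r) (Ioc 0 δ) := by
    rw [← intervalIntegrable_iff_integrableOn_Ioc_of_le hδ.le]
    exact intervalIntegral.intervalIntegrable_rpow' hr.1
  calc m * δ * (r + 1)⁻¹ ≤ m * δ ^ (r + 1) * (r + 1)⁻¹ := by
        gcongr
        simpa using rpow_le_rpow_of_exponent_ge hδ hδ1 (by linarith [hr.2] : r + 1 ≤ 1)
    _ = ∫ x in Ioc 0 δ, m * x ^ r := by
        rw [integral_const_mul, ← intervalIntegral.integral_of_le hδ.le,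
          integral_rpow (Or.inl hr.1), zero_rpow hr1.ne']
        ring
    _ ≤ ∫ x in Ioc 0 δ, x ^ r * f x :=
        setIntegral_mono_on (hpow.const_mul m) hint measurableSet_Ioc fun x hx => by
          rw [mul_comm m]
          exact mul_le_mul_of_nonneg_left (hfm x hx) (rpow_nonneg hx.1.le r)

lemma neg_le_setIntegral_Ioi_rpow_mul {δ r : ℝ} (hδ : 0 < δ) (hδ1 : δ ≤ 1) (hr : r ∈ Icc (-1) 0)
    (hf : IntegrableOn f (Ioi δ)) (hint : IntegrableOn (fun x => x ^ r * f x) (Ioi δ)) :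
    -(δ⁻¹ * ∫ x in Ioi δ, |f x|) ≤ ∫ x in Ioi δ, x ^ r * f x := by
  rw [← integral_const_mul, ← integral_neg]
  refine setIntegral_mono_on (hf.abs.const_mul _).neg hint measurableSet_Ioi fun x hx => ?_
  have hx0 : 0 < x := hδ.trans hx
  have hxr : x ^ r ≤ δ⁻¹ := calc
    x ^ r ≤ δ ^ r := rpow_le_rpow_of_nonpos hδ (le_of_lt hx) hr.2
    _ ≤ δ ^ (-1 : ℝ) := rpow_le_rpow_of_exponent_ge hδ hδ1 hr.1
    _ = δ⁻¹ := rpow_neg_one δ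
  calc -(δ⁻¹ * |f x|) ≤ -(x ^ r * |f x|) := neg_le_neg (by gcongr)
    _ = -|x ^ r * f x| := by rw [abs_mul, abs_of_nonneg (rpow_nonneg hx0.le r)]
    _ ≤ x ^ r * f x := neg_abs_le _

lemma tendsto_powerMoment_nhdsGT_neg_one (hf : Continuous f)
    (hf_top : f =O[atTop] fun x => exp (-x)) (h0 : 0 < f 0) :
    Tendsto (powerMoment f) (𝓝[>] (-1)) atTop := by
  obtain ⟨δ, hδ, hδ1, hfδ⟩ : ∃ δ, 0 < δ ∧ δ ≤ 1 ∧ ∀ x ∈ Ioc 0 δ, f 0 / 2 ≤ f x := by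
    obtain ⟨l, u, ⟨hl, hu⟩, hsub⟩ := mem_nhds_iff_exists_Ioo_subset.1
      (hf.continuousAt.preimage_mem_nhds (Ioi_mem_nhds (half_lt_self h0)))
    refine ⟨min (u / 2) 1, by positivity, min_le_right _ _,
      fun x hx => (hsub ⟨hl.trans hx.1, ?_⟩).le⟩
    linarith [hx.2.trans (min_le_left _ _)]
  have hint : ∀ {r : ℝ}, -1 < r → ∀ s ⊆ Ioi 0, IntegrableOn (fun x => x ^ r * f x) s :=
    fun hr s hs => (integrableOn_rpow_mul hf hf_top hr).mono_set hs
  have hlower : ∀ r ∈ Ioo (-1 : ℝ) 0,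
      f 0 / 2 * δ * (r + 1)⁻¹ - δ⁻¹ * ∫ x in Ioi δ, |f x| ≤ powerMoment f r := by
    intro r hr
    rw [powerMoment, ← Ioc_union_Ioi_eq_Ioi hδ.le, setIntegral_union (Ioc_disjoint_Ioi le_rfl)
      measurableSet_Ioi (hint hr.1 _ Ioc_subset_Ioi_self) (hint hr.1 _ (Ioi_subset_Ioi hδ.le))]
    have h₁ := le_setIntegral_Ioc_rpow_mul hδ hδ1 (by positivity) ⟨hr.1, hr.2.le⟩ hfδ
      (hint hr.1 _ Ioc_subset_Ioi_self)
    have h₂ := neg_le_setIntegral_Ioi_rpow_mul hδ hδ1 ⟨hr.1.le, hr.2.le⟩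
      (by simpa using hint neg_one_lt_zero _ (Ioi_subset_Ioi hδ.le))
      (hint hr.1 _ (Ioi_subset_Ioi hδ.le))
    linarith
  have hshift : Tendsto (fun r : ℝ => r + 1) (𝓝[>] (-1)) (𝓝[>] 0) :=
    tendsto_nhdsWithin_iff.2 ⟨((continuous_add_const 1).tendsto' (-1) 0 (by norm_num)).mono_left
      nhdsWithin_le_nhds, eventually_nhdsWithin_of_forall fun r hr =>
      show (0 : ℝ) < r + 1 from neg_lt_iff_pos_add.mp hr⟩
  refine tendsto_atTop_mono' _ (eventually_of_mem (Ioo_mem_nhdsGT neg_one_lt_zero) hlower) ?_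
  exact tendsto_atTop_add_const_right _ _
    ((tendsto_inv_nhdsGT_zero.comp hshift).const_mul_atTop (by positivity))

theorem exists_sign_change_powerMoment (hf : Continuous f)
    (hf_top : f =O[atTop] fun x => exp (-x)) (hx₀ : 0 < x₀) (hpos : ∀ x ∈ Ico 0 x₀, 0 < f x)
    (hneg : ∀ x ∈ Ioi x₀, f x ≤ 0) (hint : ∫ x in Ioi 0, f x < 0) :
    ∃ rq ∈ Ioo (-1 : ℝ) 0, powerMoment f rq = 0 ∧ (∀ r ∈ Ioo (-1) rq, 0 < powerMoment f r) ∧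
      (∀ r ∈ Ioo rq 0, powerMoment f r < 0) ∧
      ∀ r ∈ Ioo (-1) 0, powerMoment f r = 0 → r = rq := by
  have hanti := strictAntiOn_powerMoment_div_rpow hf hf_top hx₀
    (fun x hx => hpos x ⟨hx.1.le, hx.2⟩) hneg
  refine exists_sign_change_of_crossing
    ((continuousOn_powerMoment hf hf_top).mono Ioc_subset_Ioi_self) ?_
    (by simpa [powerMoment] using hint) fun r₁ hr₁ r₂ hr₂ hr hF => ?_
  · obtain ⟨r, hr, hFr⟩ := (((tendsto_powerMoment_nhdsGT_neg_one hf hf_top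
      (hpos 0 ⟨le_rfl, hx₀⟩)).eventually_gt_atTop 0).and (Ioo_mem_nhdsGT neg_one_lt_zero)).exists
    exact ⟨r, hFr, hr⟩
  · have h₁ : powerMoment f r₁ / x₀ ^ r₁ ≤ 0 := div_nonpos_of_nonpos_of_nonneg hF (by positivity)
    exact lt_of_not_ge fun h₂ =>
      (div_nonneg h₂ (by positivity)).not_gt ((hanti hr₁.1 hr₂.1 hr).trans_le h₁)

end PowerMoment

section Afun

variable {q : ℝ}

lemma afun_eq_exp_mul (x : ℝ) : afun q x = exp x * (q - 1 - exp x) / (exp x + q - 1) ^ 3 := by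
  rw [afun, two_mul, exp_add]
  ring

lemma exp_add_sub_one_pos (hq : 1 ≤ q) (x : ℝ) : 0 < exp x + q - 1 := by
  linarith [exp_pos x]

lemma exp_div_sq_le_exp_neg (hq : 1 ≤ q) (x : ℝ) :
    exp x / (exp x + q - 1) ^ 2 ≤ exp (-x) := by
  calc exp x / (exp x + q - 1) ^ 2 ≤ exp x / exp x ^ 2 := by gcongr; linarith
    _ = exp (-x) := by rw [exp_neg]; field_simp

lemma continuous_afun (hq : 1 ≤ q) : Continuous (afun q) :=
  Continuous.div (by fun_prop) (by fun_prop) fun x => (pow_pos (exp_add_sub_one_pos hq x) 3).ne'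

lemma afun_pos (hq : 1 < q) {x : ℝ} (hx : x < log (q - 1)) : 0 < afun q x := by
  have : exp x < q - 1 := (lt_log_iff_exp_lt (by linarith)).1 hx
  rw [afun_eq_exp_mul]
  exact div_pos (mul_pos (exp_pos x) (by linarith)) (pow_pos (exp_add_sub_one_pos hq.le x) 3)

lemma afun_neg (hq : 1 < q) {x : ℝ} (hx : log (q - 1) < x) : afun q x < 0 := by
  have : q - 1 < exp x := (log_lt_iff_lt_exp (by linarith)).1 hx
  rw [afun_eq_exp_mul]
  exact div_neg_of_neg_of_pos (mul_neg_of_pos_of_neg (exp_pos x) (by linarith))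
    (pow_pos (exp_add_sub_one_pos hq.le x) 3)

lemma abs_afun_le_exp_neg (hq : 1 ≤ q) (x : ℝ) : |afun q x| ≤ exp (-x) := by
  have hden := exp_add_sub_one_pos hq x
  calc |afun q x| = exp x * |q - 1 - exp x| / (exp x + q - 1) ^ 3 := by
        rw [afun_eq_exp_mul, abs_div, abs_mul, abs_of_pos (exp_pos x), abs_of_pos (pow_pos hden 3)]
    _ ≤ exp x * (exp x + q - 1) / (exp x + q - 1) ^ 3 := by
        gcongr
        rw [abs_le]
        constructor <;> linarith [exp_pos x]
    _ = exp x / (exp x + q - 1) ^ 2 := by field_simp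
    _ ≤ exp (-x) := exp_div_sq_le_exp_neg hq x

lemma afun_isBigO_exp_neg (hq : 1 ≤ q) : afun q =O[atTop] fun x => exp (-x) :=
  isBigO_of_le _ fun x => by simpa [abs_of_pos (exp_pos _)] using abs_afun_le_exp_neg hq x

lemma hasDerivAt_exp_div_sq (hq : 1 ≤ q) (x : ℝ) :
    HasDerivAt (fun x => exp x / (exp x + q - 1) ^ 2) (afun q x) x := by
  have hden := exp_add_sub_one_pos hq x
  refine ((hasDerivAt_exp x).div ((((hasDerivAt_exp x).add_const q).sub_const 1).fun_pow 2)
    (pow_pos hden 2).ne').congr_deriv ?_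
  rw [afun_eq_exp_mul]
  field_simp
  ring

lemma integral_afun (hq : 1 ≤ q) : ∫ x in Ioi 0, afun q x = -1 / q ^ 2 := by
  have htend : Tendsto (fun x => exp x / (exp x + q - 1) ^ 2) atTop (𝓝 0) :=
    squeeze_zero (fun x => (div_pos (exp_pos x) (pow_pos (exp_add_sub_one_pos hq x) 2)).le)
      (exp_div_sq_le_exp_neg hq) tendsto_exp_neg_atTop_nhds_zero
  have hint : IntegrableOn (afun q) (Ioi 0) := by
    simpa using integrableOn_rpow_mul (continuous_afun hq) (afun_isBigO_exp_neg hq)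
      neg_one_lt_zero
  rw [integral_Ioi_of_hasDerivAt_of_tendsto' (fun x _ => hasDerivAt_exp_div_sq hq x) hint htend]
  simp [neg_div]

end Afun

/-- **Existence of the smoothing exponent `r(q)`**: there is a unique `r(q) ∈ (−1,0)`
with `∫_0^∞ x^{r(q)} a(x) dx = 0`, the integral being positive below `r(q)` and
negative above. -/
theorem smoothing_exponent_exists (q : ℕ) (hq : 3 ≤ q) :
    ∃ rq : ℝ, rq ∈ Ioo (-1 : ℝ) 0 ∧
      (∫ x in Ioi (0 : ℝ), x ^ rq * afun q x) = 0 ∧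
      (∀ r ∈ Ioo (-1 : ℝ) rq, 0 < ∫ x in Ioi (0 : ℝ), x ^ r * afun q x) ∧
      (∀ r ∈ Ioo rq (0 : ℝ), (∫ x in Ioi (0 : ℝ), x ^ r * afun q x) < 0) ∧
      (∀ r ∈ Ioo (-1 : ℝ) 0, (∫ x in Ioi (0 : ℝ), x ^ r * afun q x) = 0 → r = rq) := by
  have hq' : (3 : ℝ) ≤ q := by exact_mod_cast hq
  have hint : ∫ x in Ioi 0, afun q x < 0 := by
    rw [integral_afun (by linarith)]
    exact div_neg_of_neg_of_pos (by norm_num) (pow_pos (by linarith) 2)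
  exact exists_sign_change_powerMoment (continuous_afun (by linarith))
    (afun_isBigO_exp_neg (by linarith)) (log_pos (by linarith))
    (fun x hx => afun_pos (by linarith) hx.2) (fun x hx => (afun_neg (by linarith) hx).le) hint
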